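/- If 𝔠 is a formal power series over ℚ satisfying 𝔠 = exp(t·𝔠), and 𝔡 := 𝔠 - (1/2)·t·𝔠², then the derivative of t·𝔡 equals 𝔠, i.e. (t𝔡)' = 𝔠. -/

import Mathlib

/-!
Put `u = t𝔠`. The chain rule applied to `𝔠 = exp u` gives `𝔠' = 𝔠 u'`, and `u' = 𝔠 + t𝔠'`, so
`u' = 𝔠 + u u'`, i.e. `u' (1 - u) = 𝔠`. On the other hand `t𝔡 = u - u²/2`, whose derivative
is `u' (1 - u)`.
-/

open PowerSeries

/-- The formal exponential `exp f = ∑_m f^m / m!`, defined coefficientwise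
(valid for `f` with zero constant term). -/
noncomputable def psExp (f : PowerSeries ℚ) : PowerSeries ℚ :=
  PowerSeries.mk fun n =>
    ∑ m ∈ Finset.range (n + 1),
      ((m.factorial : ℚ)⁻¹) * PowerSeries.coeff (R := ℚ) n (f ^ m)

namespace PowerSeries

theorem coeff_pow_eq_zero_of_lt {R : Type*} [CommSemiring R] {f : R⟦X⟧}
    (hf : constantCoeff f = 0) {n m : ℕ} (hnm : n < m) : coeff n (f ^ m) = 0 :=
  coeff_of_lt_order n <| (Nat.cast_lt.mpr hnm).trans_le <|
    le_order_pow_of_constantCoeff_eq_zero m hf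

theorem derivative_X_mul {R : Type*} [CommSemiring R] (f : R⟦X⟧) :
    d⁄dX R (X * f) = f + X * d⁄dX R f := by
  simp [Derivation.leibniz, smul_eq_mul, add_comm]

theorem derivative_sub_half_mul_sq {K : Type*} [Field K] [NeZero (2 : K)] (u : K⟦X⟧) :
    d⁄dX K (u - C (1 / 2) * u ^ 2) = d⁄dX K u * (1 - u) := by
  have half : (C (1 / 2) : K⟦X⟧) * 2 = 1 := by
    rw [← map_ofNat C 2, ← map_mul, one_div, inv_mul_cancel₀ two_ne_zero, map_one]
  rw [map_sub, Derivation.leibniz, derivative_C, derivative_pow]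
  simp only [smul_eq_mul, Nat.cast_ofNat, Nat.add_one_sub_one, pow_one, mul_zero, add_zero]
  linear_combination (-(u * d⁄dX K u)) * half

end PowerSeries

theorem psExp_eq_subst_exp {f : ℚ⟦X⟧} (hf : constantCoeff f = 0) :
    psExp f = (exp ℚ).subst f := by
  ext n
  rw [psExp, coeff_mk, coeff_subst' (.of_constantCoeff_zero' hf),
    finsum_eq_sum_of_support_subset (s := Finset.range (n + 1))]
  · simp [coeff_exp, smul_eq_mul]
  · intro m hm
    contrapose! hm
    simp [coeff_pow_eq_zero_of_lt hf (by simpa using hm)]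

theorem derivative_psExp {f : ℚ⟦X⟧} (hf : constantCoeff f = 0) :
    d⁄dX ℚ (psExp f) = psExp f * d⁄dX ℚ f := by
  rw [psExp_eq_subst_exp hf, derivative_subst (.of_constantCoeff_zero' hf), derivative_exp]

theorem deriv_X_mul_d_eq_c (c d : PowerSeries ℚ)
    (hc : c = psExp (PowerSeries.X * c))
    (hd : d = c - PowerSeries.C (R := ℚ) (1 / 2) * (PowerSeries.X * c ^ 2)) :
    PowerSeries.derivative ℚ (PowerSeries.X * d) = c := by
  have hc' : d⁄dX ℚ c = c * d⁄dX ℚ (X * c) := by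
    conv_lhs => rw [hc]
    rw [derivative_psExp (by simp), ← hc]
  have hXd : X * d = X * c - C (1 / 2) * (X * c) ^ 2 := by
    rw [hd]
    ring
  rw [hXd, derivative_sub_half_mul_sq]
  linear_combination derivative_X_mul c + X * hc'
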